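/- Assume λ₂ = 0. Then lim_{n→∞} a_n/√n = lim_{n→∞} b_n/√n = 1/(2√3), where a_n = k_n/k̂_{n-1} and b_n = k̂_n/k_{n-1}. -/

import Mathlib

/-!
For `λ₂ = 0` the Sobolev product is the Freud product plus the point mass `λ₁ δ₀`. Since
`Q n - P n` has degree `< n`, orthogonality gives `k̂ n = k n + λ₁ Q_n(0) P_n(0)`, and expanding
`Q n - P n` in `P 0, …, P (n - 1)` gives `Q_n(0) (1 + λ₁ K_{n-1}(0,0)) = P_n(0)`. With
`t n = P_n(0)² / k n` this reads `k̂ n / k n = 1 + λ₁ t n / (1 + λ₁ ∑_{j<n} t j)`.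
The three-term recurrence gives `k (n+1) = c (n+1) k n` and `t (n+2) = (c (n+1) / c (n+2)) t n`;
as `c (n+1) / c (n+2) → 1`, each `t n` is at most twice each of `t (n-2)`, …, `t (n-2N)`, so
`t n = o(∑_{j<n} t j)` and `k̂ n / k n → 1`. Finally `a n = c n k (n-1) / k̂ (n-1)` and
`b n = c n k̂ n / k n`, so both behave like `c n`.
-/

open Polynomial MeasureTheory Filter Topology

/-- The Freud inner product `⟨f,g⟩_F = ∫_ℝ f(x) g(x) e^{-x⁴} dx`. -/
noncomputable def innerF (f g : Polynomial ℝ) : ℝ :=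
  ∫ x : ℝ, f.eval x * g.eval x * Real.exp (-x ^ 4)


/-- The Sobolev inner product
`⟨f,g⟩_S = ⟨f,g⟩_F + λ₁ f(0) g(0) + λ₂ f'(0) g'(0)`. -/
noncomputable def innerS (l1 l2 : ℝ) (f g : Polynomial ℝ) : ℝ :=
  innerF f g + l1 * f.eval 0 * g.eval 0
    + l2 * (Polynomial.derivative f).eval 0 * (Polynomial.derivative g).eval 0

theorem Polynomial.Monic.degree_sub_lt_of_natDegree_eq {R : Type*} [Ring R] [Nontrivial R]
    {p q : R[X]} {n : ℕ} (hp : p.Monic) (hq : q.Monic) (hpn : p.natDegree = n)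
    (hqn : q.natDegree = n) : (p - q).degree < n := by
  have hpdeg : p.degree = n := by rw [degree_eq_natDegree hp.ne_zero, hpn]
  have hqdeg : q.degree = n := by rw [degree_eq_natDegree hq.ne_zero, hqn]
  exact hpdeg ▸ degree_sub_lt_left (hpdeg.trans hqdeg.symm) hp.ne_zero
    (by rw [hp.leadingCoeff, hq.leadingCoeff])

structure IsMonicOrthogonalSequence {K : Type*} [Field K] (B : LinearMap.BilinForm K K[X])
    (P : ℕ → K[X]) : Prop where
  monic : ∀ n, (P n).Monic
  natDegree_eq : ∀ n, (P n).natDegree = n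
  orthogonal : ∀ n m, m < n → B (P n) (X ^ m) = 0

/-- The diagonal value `K_{n-1}(a, a)` of the Christoffel–Darboux kernel of `P`. -/
noncomputable def christoffelDarbouxDiag {K : Type*} [Field K] (B : LinearMap.BilinForm K K[X])
    (P : ℕ → K[X]) (n : ℕ) (a : K) : K :=
  ∑ j ∈ Finset.range n, (P j).eval a ^ 2 / B (P j) (P j)

namespace IsMonicOrthogonalSequence

variable {K : Type*} [Field K] {B B' : LinearMap.BilinForm K K[X]} {P Q : ℕ → K[X]} {l a : K}

theorem degree_eq (hP : IsMonicOrthogonalSequence B P) (n : ℕ) : (P n).degree = n := by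
  rw [degree_eq_natDegree (hP.monic n).ne_zero, hP.natDegree_eq n]

theorem apply_eq_zero_of_degree_lt (hP : IsMonicOrthogonalSequence B P) {n : ℕ} {f : K[X]}
    (hf : f.degree < n) : B (P n) f = 0 := by
  classical
  have hker : degreeLT K n ≤ LinearMap.ker (B (P n)) := by
    rw [degreeLT_eq_span_X_pow, Submodule.span_le, Finset.coe_image, Set.image_subset_iff]
    intro m hm
    exact hP.orthogonal n m (Finset.mem_range.1 hm)
  exact hker (mem_degreeLT.2 hf)

theorem apply_eq_apply_self_of_monic (hP : IsMonicOrthogonalSequence B P) {n : ℕ} {q : K[X]}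
    (hq : q.Monic) (hqn : q.natDegree = n) : B (P n) q = B (P n) (P n) := by
  have hlt := hq.degree_sub_lt_of_natDegree_eq (hP.monic n) hqn (hP.natDegree_eq n)
  rw [← sub_add_cancel q (P n), map_add, hP.apply_eq_zero_of_degree_lt hlt, zero_add]

theorem apply_eq_zero_of_ne (hP : IsMonicOrthogonalSequence B P) (hB : B.IsSymm) {i j : ℕ}
    (hij : i ≠ j) : B (P i) (P j) = 0 := by
  rcases hij.lt_or_gt with h | h
  · rw [hB.eq]
    exact hP.apply_eq_zero_of_degree_lt (by rw [hP.degree_eq]; exact_mod_cast h)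
  · exact hP.apply_eq_zero_of_degree_lt (by rw [hP.degree_eq]; exact_mod_cast h)

theorem eq_sum_of_degree_lt (hP : IsMonicOrthogonalSequence B P) (hB : B.IsSymm)
    (hnorm : ∀ j, B (P j) (P j) ≠ 0) {n : ℕ} {f : K[X]} (hf : f.degree < n) :
    f = ∑ j ∈ Finset.range n, (B f (P j) / B (P j) (P j)) • P j := by
  let S : Polynomial.Sequence K := ⟨P, hP.degree_eq⟩
  let Φ : K[X] →ₗ[K] K[X] := LinearMap.id -
    ∑ j ∈ Finset.range n, ((B (P j) (P j))⁻¹ • B.flip (P j)).smulRight (P j)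
  have hΦ : ∀ g, Φ g = g - ∑ j ∈ Finset.range n, (B g (P j) / B (P j) (P j)) • P j := by
    intro g
    simp [Φ, div_eq_inv_mul]
  have hker : degreeLT K n ≤ LinearMap.ker Φ := by
    rw [← S.span_degreeLT fun i _ => by simp [S, (hP.monic i).leadingCoeff], Submodule.span_le]
    rintro _ ⟨i, hi, rfl⟩
    rw [SetLike.mem_coe, LinearMap.mem_ker, hΦ, sub_eq_zero, Finset.sum_eq_single i]
    · rw [div_self (hnorm i), one_smul]
    · intro j _ hji
      rw [hP.apply_eq_zero_of_ne hB hji.symm, zero_div, zero_smul]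
    · intro hi'
      exact absurd (Finset.mem_range.2 hi) hi'
  exact sub_eq_zero.1 ((hΦ f).symm.trans (hker (mem_degreeLT.2 hf)))

theorem apply_self_succ (hP : IsMonicOrthogonalSequence B P)
    (hX : ∀ f g, B (X * f) g = B f (X * g)) {c : ℕ → K}
    (hrec : ∀ n, 1 ≤ n → X * P n = P (n + 1) + C (c n) * P (n - 1)) (n : ℕ) :
    B (P (n + 1)) (P (n + 1)) = c (n + 1) * B (P n) (P n) := calc
  B (P (n + 1)) (P (n + 1)) = B (P (n + 1)) (X * X ^ n) := by
    rw [← pow_succ', hP.apply_eq_apply_self_of_monic (monic_X_pow _) (natDegree_X_pow _)]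
  _ = B (P (n + 2) + c (n + 1) • P n) (X ^ n) := by
    rw [← hX, hrec (n + 1) le_add_self, C_mul', Nat.add_sub_cancel]
  _ = c (n + 1) * B (P n) (P n) := by
    rw [map_add, LinearMap.add_apply, LinearMap.map_smul₂, smul_eq_mul,
      hP.apply_eq_zero_of_degree_lt (by rw [degree_X_pow]; exact_mod_cast (by omega : n < n + 2)),
      hP.apply_eq_apply_self_of_monic (monic_X_pow _) (natDegree_X_pow _), zero_add]

theorem apply_self_of_eq_add_eval_mul_eval (hP : IsMonicOrthogonalSequence B P)
    (hQ : IsMonicOrthogonalSequence B' Q) (hB : B.IsSymm)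
    (hB' : ∀ f g, B' f g = B f g + l * f.eval a * g.eval a) (n : ℕ) :
    B' (Q n) (Q n) = B (P n) (P n) + l * (Q n).eval a * (P n).eval a := by
  rw [← hQ.apply_eq_apply_self_of_monic (hP.monic n) (hP.natDegree_eq n), hB', hB.eq,
    hP.apply_eq_apply_self_of_monic (hQ.monic n) (hQ.natDegree_eq n)]

theorem eval_mul_one_add_christoffelDarbouxDiag (hP : IsMonicOrthogonalSequence B P)
    (hQ : IsMonicOrthogonalSequence B' Q) (hB : B.IsSymm) (hnorm : ∀ j, B (P j) (P j) ≠ 0)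
    (hB' : ∀ f g, B' f g = B f g + l * f.eval a * g.eval a) (n : ℕ) :
    (Q n).eval a * (1 + l * christoffelDarbouxDiag B P n a) = (P n).eval a := by
  have hlt := (hQ.monic n).degree_sub_lt_of_natDegree_eq (hP.monic n) (hQ.natDegree_eq n)
    (hP.natDegree_eq n)
  have hcoeff : ∀ j ∈ Finset.range n,
      B (Q n - P n) (P j) / B (P j) (P j) * (P j).eval a
        = -(l * (Q n).eval a) * ((P j).eval a ^ 2 / B (P j) (P j)) := by
    intro j hj
    have hj' : j < n := Finset.mem_range.1 hj
    have hQj : B (Q n) (P j) = -(l * (Q n).eval a * (P j).eval a) := by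
      rw [eq_neg_iff_add_eq_zero, ← hB',
        hQ.apply_eq_zero_of_degree_lt (by rw [hP.degree_eq]; exact_mod_cast hj')]
    rw [map_sub, LinearMap.sub_apply, hP.apply_eq_zero_of_ne hB hj'.ne', hQj, sub_zero]
    ring
  have hexp := congrArg (eval a) (hP.eq_sum_of_degree_lt hB hnorm hlt)
  simp only [eval_sub, eval_finsetSum, eval_smul, smul_eq_mul, Finset.sum_congr rfl hcoeff,
    ← Finset.mul_sum] at hexp
  rw [christoffelDarbouxDiag]
  linear_combination hexp

theorem apply_self_div_apply_self_of_eq_add_eval_mul_eval (hP : IsMonicOrthogonalSequence B P)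
    (hQ : IsMonicOrthogonalSequence B' Q) (hB : B.IsSymm) (hnorm : ∀ j, B (P j) (P j) ≠ 0)
    (hB' : ∀ f g, B' f g = B f g + l * f.eval a * g.eval a) (n : ℕ) :
    B' (Q n) (Q n) / B (P n) (P n) = 1 + l * ((P n).eval a ^ 2 / B (P n) (P n)) /
      (1 + l * christoffelDarbouxDiag B P n a) := by
  have hQa := hP.eval_mul_one_add_christoffelDarbouxDiag hQ hB hnorm hB' n
  rw [hP.apply_self_of_eq_add_eval_mul_eval hQ hB hB', ← hQa]
  field_simp [hnorm n]

theorem eval_zero_sq_div_apply_self_add_two (hP : IsMonicOrthogonalSequence B P)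
    (hX : ∀ f g, B (X * f) g = B f (X * g)) (hnorm : ∀ j, B (P j) (P j) ≠ 0) {c : ℕ → K}
    (hrec : ∀ n, 1 ≤ n → X * P n = P (n + 1) + C (c n) * P (n - 1)) (n : ℕ) :
    (P (n + 2)).eval 0 ^ 2 / B (P (n + 2)) (P (n + 2))
      = c (n + 1) / c (n + 2) * ((P n).eval 0 ^ 2 / B (P n) (P n)) := by
  have hnorm_succ := hP.apply_self_succ hX hrec
  have hc : ∀ m, c (m + 1) ≠ 0 := fun m h => hnorm (m + 1) (by rw [hnorm_succ, h, zero_mul])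
  have heval : (P (n + 2)).eval 0 = -(c (n + 1) * (P n).eval 0) := by
    have := congrArg (eval 0) (hrec (n + 1) le_add_self)
    simp only [eval_mul, eval_X, zero_mul, eval_add, eval_C, Nat.add_sub_cancel] at this
    linear_combination -this
  rw [heval, hnorm_succ, hnorm_succ]
  field_simp [hc n, hc (n + 1), hnorm n]

end IsMonicOrthogonalSequence

theorem tendsto_div_succ_of_tendsto_div_sqrt {u : ℕ → ℝ} {L : ℝ}
    (hu : Tendsto (fun n => u n / Real.sqrt n) atTop (𝓝 L)) (hL : L ≠ 0) :
    Tendsto (fun n => u n / u (n + 1)) atTop (𝓝 1) := by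
  have hsqrt : Tendsto (fun n : ℕ => Real.sqrt (n / (n + 1))) atTop (𝓝 1) := by
    simpa using (tendsto_natCast_div_add_atTop (1 : ℝ)).sqrt
  have hquot := (hu.div (hu.comp (tendsto_add_atTop_nat 1)) hL).mul hsqrt
  rw [div_self hL, one_mul] at hquot
  refine hquot.congr' ((eventually_ge_atTop 1).mono fun n hn => ?_)
  have hn : (0 : ℝ) < n := by exact_mod_cast hn
  simp only [Pi.div_apply, Function.comp_apply]
  rw [Real.sqrt_div' _ (by positivity), Nat.cast_add_one]
  rcases eq_or_ne (u (n + 1)) 0 with h | h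
  · simp [h]
  · field_simp

theorem eventually_le_two_mul_sub_of_eventually_le_one_add_mul {t : ℕ → ℝ}
    (ht : ∀ n, 0 ≤ t n) (hgrowth : ∀ ε > 0, ∀ᶠ n in atTop, t (n + 2) ≤ (1 + ε) * t n)
    (N : ℕ) : ∀ᶠ n in atTop, ∀ s ∈ Finset.range N, t n ≤ 2 * t (n - 2 * (s + 1)) := by
  -- `δ = log 2 / (N + 1)` is chosen so that `(1 + δ) ^ (N + 1) ≤ exp ((N + 1) δ) = 2`.
  set δ := Real.log 2 / (N + 1)
  have hδ : 0 < δ := div_pos (Real.log_pos one_lt_two) N.cast_add_one_pos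
  obtain ⟨M, hM⟩ := eventually_atTop.1 (hgrowth δ hδ)
  have hiter : ∀ m ≥ M, ∀ s, t (m + 2 * s) ≤ (1 + δ) ^ s * t m := by
    intro m hm s
    induction s with
    | zero => simp
    | succ s ih =>
      calc t (m + 2 * (s + 1)) = t (m + 2 * s + 2) := by rw [mul_add_one, add_assoc]
        _ ≤ (1 + δ) * t (m + 2 * s) := hM _ (by omega)
        _ ≤ (1 + δ) * ((1 + δ) ^ s * t m) := by gcongr
        _ = (1 + δ) ^ (s + 1) * t m := by ring
  have hpow : ∀ s ≤ N + 1, (1 + δ) ^ s ≤ 2 := by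
    intro s hs
    calc (1 + δ) ^ s ≤ (1 + δ) ^ (N + 1) := pow_le_pow_right₀ (by linarith) hs
      _ ≤ Real.exp δ ^ (N + 1) :=
        pow_le_pow_left₀ (by positivity) (by linarith [Real.add_one_le_exp δ]) _
      _ = 2 := by
        rw [← Real.exp_nat_mul, Nat.cast_add_one, mul_div_cancel₀ _ N.cast_add_one_pos.ne',
          Real.exp_log two_pos]
  filter_upwards [eventually_ge_atTop (M + 2 * N)] with n hn s hs
  have hs := Finset.mem_range.1 hs
  calc t n = t (n - 2 * (s + 1) + 2 * (s + 1)) := by rw [Nat.sub_add_cancel (by omega)]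
    _ ≤ (1 + δ) ^ (s + 1) * t (n - 2 * (s + 1)) := hiter _ (by omega) _
    _ ≤ 2 * t (n - 2 * (s + 1)) := by gcongr; exacts [ht _, hpow _ (by omega)]

theorem isLittleO_sum_range_of_eventually_le_one_add_mul {t : ℕ → ℝ} (ht : ∀ n, 0 ≤ t n)
    (hgrowth : ∀ ε > 0, ∀ᶠ n in atTop, t (n + 2) ≤ (1 + ε) * t n) :
    t =o[atTop] fun n => ∑ j ∈ Finset.range n, t j := by
  rw [Asymptotics.isLittleO_iff]
  intro ε hε
  obtain ⟨N, hN⟩ := exists_nat_gt (2 / ε)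
  filter_upwards [eventually_le_two_mul_sub_of_eventually_le_one_add_mul ht hgrowth N,
    eventually_ge_atTop (2 * N)] with n hterm hn
  have hsub : ∑ s ∈ Finset.range N, t (n - 2 * (s + 1)) ≤ ∑ j ∈ Finset.range n, t j := by
    rw [← Finset.sum_image fun x hx y hy h => by
      rw [Finset.mem_coe, Finset.mem_range] at hx hy; omega]
    refine Finset.sum_le_sum_of_subset_of_nonneg (fun j hj => ?_) fun j _ _ => ht j
    obtain ⟨s, hs, rfl⟩ := Finset.mem_image.1 hj
    exact Finset.mem_range.2 (by rw [Finset.mem_range] at hs; omega)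
  have hNt : N * t n ≤ 2 * ∑ j ∈ Finset.range n, t j := by
    calc N * t n = ∑ _s ∈ Finset.range N, t n := by simp
      _ ≤ ∑ s ∈ Finset.range N, 2 * t (n - 2 * (s + 1)) := Finset.sum_le_sum hterm
      _ ≤ 2 * ∑ j ∈ Finset.range n, t j := by rw [← Finset.mul_sum]; linarith
  have hεN : 2 < ε * N := by rwa [div_lt_iff₀' hε] at hN
  rw [Real.norm_of_nonneg (ht n), Real.norm_of_nonneg (Finset.sum_nonneg fun j _ => ht j)]
  nlinarith [ht n]

theorem tendsto_mul_div_one_add_mul_of_isLittleO {t S : ℕ → ℝ} {l : ℝ} (hl : 0 ≤ l)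
    (hS : ∀ n, 0 ≤ S n) (h : t =o[atTop] S) :
    Tendsto (fun n => l * t n / (1 + l * S n)) atTop (𝓝 0) := by
  have hbig : (fun n => l * S n) =O[atTop] fun n => 1 + l * S n :=
    Asymptotics.IsBigO.of_bound 1 (Eventually.of_forall fun n => by
      have := mul_nonneg hl (hS n)
      rw [Real.norm_of_nonneg this, Real.norm_of_nonneg (by linarith), one_mul]
      linarith)
  exact (((Asymptotics.isBigO_refl (fun _ => l) atTop).mul_isLittleO h).trans_isBigO
    hbig).tendsto_div_nhds_zero

theorem integrable_pow_mul_exp_neg_pow_four (n : ℕ) :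
    Integrable (fun x : ℝ => x ^ n * Real.exp (-x ^ 4)) := by
  refine ((integrable_exp_neg_mul_sq one_pos).const_mul
    (Real.exp ((n : ℝ) ^ 2 / 2 + 3 / 4))).mono' (by fun_prop) (Eventually.of_forall fun x => ?_)
  have hpow : |x| ^ n ≤ Real.exp (n * |x|) := by
    rw [Real.exp_nat_mul]
    exact pow_le_pow_left₀ (abs_nonneg x) (by linarith [Real.add_one_le_exp |x|]) n
  have hexp : (n : ℝ) * |x| - x ^ 4 ≤ (n : ℝ) ^ 2 / 2 + 3 / 4 + -1 * x ^ 2 := by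
    nlinarith [sq_nonneg (|x| - n), sq_nonneg (x ^ 2 - 1), sq_abs x]
  calc ‖x ^ n * Real.exp (-x ^ 4)‖ = |x| ^ n * Real.exp (-x ^ 4) := by
        rw [norm_mul, norm_pow, Real.norm_eq_abs, Real.norm_of_nonneg (Real.exp_pos _).le]
    _ ≤ Real.exp (n * |x|) * Real.exp (-x ^ 4) := by gcongr
    _ = Real.exp (n * |x| - x ^ 4) := by rw [← Real.exp_add, sub_eq_add_neg]
    _ ≤ Real.exp ((n : ℝ) ^ 2 / 2 + 3 / 4) * Real.exp (-1 * x ^ 2) := by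
        rw [← Real.exp_add]; exact Real.exp_le_exp.2 (by linarith)

theorem integrable_eval_mul_exp_neg_pow_four (p : ℝ[X]) :
    Integrable (fun x : ℝ => p.eval x * Real.exp (-x ^ 4)) := by
  induction p using Polynomial.induction_on' with
  | add p q hp hq =>
    simp only [eval_add, add_mul]
    exact hp.add hq
  | monomial n a => simpa [mul_assoc] using (integrable_pow_mul_exp_neg_pow_four n).const_mul a

theorem innerF_comm (f g : ℝ[X]) : innerF f g = innerF g f := by
  simp only [innerF, mul_comm (f.eval _)]

theorem innerF_add_left (f g h : ℝ[X]) : innerF (f + g) h = innerF f h + innerF g h := by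
  have hint : ∀ p : ℝ[X], Integrable (fun x => p.eval x * h.eval x * Real.exp (-x ^ 4)) :=
    fun p => by simpa only [eval_mul] using integrable_eval_mul_exp_neg_pow_four (p * h)
  simp only [innerF, ← integral_add (hint f) (hint g), eval_add, add_mul]

theorem innerF_smul_left (a : ℝ) (f g : ℝ[X]) : innerF (a • f) g = a • innerF f g := by
  simp only [innerF, smul_eq_mul, ← integral_const_mul, eval_smul, mul_assoc]

noncomputable def freudForm : LinearMap.BilinForm ℝ ℝ[X] :=
  LinearMap.mk₂ ℝ innerF innerF_add_left innerF_smul_left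
    (fun f g h => by rw [innerF_comm, innerF_add_left, innerF_comm g, innerF_comm h])
    (fun a f g => by rw [innerF_comm, innerF_smul_left, innerF_comm])

@[simp]
theorem freudForm_apply (f g : ℝ[X]) : freudForm f g = innerF f g := rfl

theorem freudForm_isSymm : freudForm.IsSymm := ⟨innerF_comm⟩

theorem freudForm_X_mul (f g : ℝ[X]) : freudForm (X * f) g = freudForm f (X * g) := by
  simp only [freudForm_apply, innerF, eval_mul, eval_X]
  congr 1 with x
  ring

theorem freudForm_self_pos {p : ℝ[X]} (hp : p ≠ 0) : 0 < freudForm p p := by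
  obtain ⟨x, hx⟩ := (finite_setOfPred_isRoot hp).infinite_compl.nonempty
  refine integral_pos_of_integrable_nonneg_nonzero (x := x) (by fun_prop)
    (by simpa only [eval_mul] using integrable_eval_mul_exp_neg_pow_four (p * p))
    (fun y => mul_nonneg (mul_self_nonneg _) (Real.exp_pos _).le) ?_
  exact mul_ne_zero (mul_self_ne_zero.2 hx) (Real.exp_pos _).ne'

noncomputable def sobolevForm (l1 l2 : ℝ) : LinearMap.BilinForm ℝ ℝ[X] :=
  LinearMap.mk₂ ℝ (innerS l1 l2)
    (fun f g h => by
      simp only [innerS, ← freudForm_apply, map_add, LinearMap.add_apply, eval_add]; ring)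
    (fun a f g => by
      simp only [innerS, ← freudForm_apply, map_smul, LinearMap.smul_apply, smul_eq_mul,
        eval_smul]; ring)
    (fun f g h => by simp only [innerS, ← freudForm_apply, map_add, eval_add]; ring)
    (fun a f g => by
      simp only [innerS, ← freudForm_apply, map_smul, smul_eq_mul, eval_smul]; ring)

@[simp]
theorem sobolevForm_apply (l1 l2 : ℝ) (f g : ℝ[X]) : sobolevForm l1 l2 f g = innerS l1 l2 f g :=
  rfl

theorem sobolevForm_zero_apply (l1 : ℝ) (f g : ℝ[X]) :
    sobolevForm l1 0 f g = freudForm f g + l1 * f.eval 0 * g.eval 0 := by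
  simp [innerS]

theorem tendsto_sobolevForm_div_freudForm {l1 : ℝ} (hl1 : 0 ≤ l1) {P Q : ℕ → ℝ[X]}
    (hP : IsMonicOrthogonalSequence freudForm P)
    (hQ : IsMonicOrthogonalSequence (sobolevForm l1 0) Q) {c : ℕ → ℝ}
    (hrec : ∀ n, 1 ≤ n → X * P n = P (n + 1) + C (c n) * P (n - 1))
    (hc : Tendsto (fun n => c n / c (n + 1)) atTop (𝓝 1)) :
    Tendsto (fun n => sobolevForm l1 0 (Q n) (Q n) / freudForm (P n) (P n)) atTop (𝓝 1) := by
  set t : ℕ → ℝ := fun n => (P n).eval 0 ^ 2 / freudForm (P n) (P n)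
  have hpos : ∀ n, 0 < freudForm (P n) (P n) := fun n => freudForm_self_pos (hP.monic n).ne_zero
  have ht : ∀ n, 0 ≤ t n := fun n => div_nonneg (sq_nonneg _) (hpos n).le
  have hρ : Tendsto (fun n => c (n + 1) / c (n + 2)) atTop (𝓝 1) :=
    hc.comp (tendsto_add_atTop_nat 1)
  have hgrowth : ∀ ε > 0, ∀ᶠ n in atTop, t (n + 2) ≤ (1 + ε) * t n := fun ε hε =>
    (hρ.eventually (eventually_le_nhds (by linarith : (1 : ℝ) < 1 + ε))).mono fun n hn => by
      simp only [t, hP.eval_zero_sq_div_apply_self_add_two freudForm_X_mul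
        (fun n => (hpos n).ne') hrec n]
      exact mul_le_mul_of_nonneg_right hn (ht n)
  have hsmall := tendsto_mul_div_one_add_mul_of_isLittleO hl1
    (fun n => Finset.sum_nonneg fun j _ => ht j)
    (isLittleO_sum_range_of_eventually_le_one_add_mul ht hgrowth)
  simpa only [hP.apply_self_div_apply_self_of_eq_add_eval_mul_eval hQ freudForm_isSymm
    (fun n => (hpos n).ne') (sobolevForm_zero_apply l1), christoffelDarbouxDiag, add_zero] using
    hsmall.const_add 1

open Filter Topology in
theorem sobolev_freud_ab_asymptotics_general
    (l1 : ℝ) (hl1 : 0 ≤ l1)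
    (P Q : ℕ → Polynomial ℝ) (k khat : ℕ → ℝ)
    (hPmonic : ∀ n, (P n).Monic) (hPdeg : ∀ n, (P n).natDegree = n)
    (hPorth : ∀ n m : ℕ, m < n → innerF (P n) (X ^ m) = 0)
    (hQmonic : ∀ n, (Q n).Monic) (hQdeg : ∀ n, (Q n).natDegree = n)
    (hQorth : ∀ n m : ℕ, m < n → innerS l1 0 (Q n) (X ^ m) = 0)
    (hk : ∀ n, k n = innerF (P n) (P n))
    (hkhat : ∀ n, khat n = innerS l1 0 (Q n) (Q n))
    (c : ℕ → ℝ)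
    (hrec : ∀ n, 1 ≤ n → X * P n = P (n + 1) + C (c n) * P (n - 1))
    (hc : Tendsto (fun n => c n / Real.sqrt n) atTop (𝓝 (1 / (2 * Real.sqrt 3))))
    (a b : ℕ → ℝ) (ha : ∀ n, a n = k n / khat (n - 1))
    (hb : ∀ n, b n = khat n / k (n - 1)) :
    Tendsto (fun n => a n / Real.sqrt n) atTop (𝓝 (1 / (2 * Real.sqrt 3))) ∧
    Tendsto (fun n => b n / Real.sqrt n) atTop (𝓝 (1 / (2 * Real.sqrt 3))) := by
  have hF : IsMonicOrthogonalSequence freudForm P := ⟨hPmonic, hPdeg, hPorth⟩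
  have hS : IsMonicOrthogonalSequence (sobolevForm l1 0) Q := ⟨hQmonic, hQdeg, hQorth⟩
  have hkpos : ∀ n, 0 < k n := fun n => hk n ▸ freudForm_self_pos (hPmonic n).ne_zero
  have hkrec : ∀ n, k (n + 1) = c (n + 1) * k n := fun n => by
    simpa only [hk, freudForm_apply] using hF.apply_self_succ freudForm_X_mul hrec n
  have hc_ne : ∀ n, c (n + 1) ≠ 0 := fun n h => (hkpos (n + 1)).ne' (by rw [hkrec, h, zero_mul])
  have hratio : Tendsto (fun n => khat n / k n) atTop (𝓝 1) := by
    simpa only [hk, hkhat, freudForm_apply, sobolevForm_apply] using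
      tendsto_sobolevForm_div_freudForm hl1 hF hS hrec
        (tendsto_div_succ_of_tendsto_div_sqrt hc (by positivity))
  constructor
  · have := ((hratio.inv₀ one_ne_zero).comp (tendsto_sub_atTop_nat 1)).mul hc
    rw [inv_one, one_mul] at this
    refine this.congr' ((eventually_ge_atTop 1).mono fun n hn => ?_)
    obtain ⟨m, rfl⟩ := Nat.exists_eq_add_of_le' hn
    simp only [Function.comp_apply, Nat.add_sub_cancel, ha, hkrec, inv_div]
    ring
  · have := hratio.mul hc
    rw [one_mul] at this
    refine this.congr' ((eventually_ge_atTop 1).mono fun n hn => ?_)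
    obtain ⟨m, rfl⟩ := Nat.exists_eq_add_of_le' hn
    simp only [hb, Nat.add_sub_cancel, hkrec]
    field_simp [hc_ne m, (hkpos m).ne']

open Filter Topology in
/-- Case `λ₂ = 0`: `a_n/√n → 1/(2√3)` and `b_n/√n → 1/(2√3)`, where
`a n = k n / k̂ (n-1)` and `b n = k̂ n / k (n-1)`. -/
theorem sobolev_freud_ab_asymptotics
    (l1 : ℝ) (hl1 : 0 ≤ l1)
    (P Q : ℕ → Polynomial ℝ) (k khat : ℕ → ℝ)
    (hPmonic : ∀ n, (P n).Monic) (hPdeg : ∀ n, (P n).natDegree = n)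
    (hPorth : ∀ n m : ℕ, m < n → innerF (P n) (X ^ m) = 0)
    (hQmonic : ∀ n, (Q n).Monic) (hQdeg : ∀ n, (Q n).natDegree = n)
    (hQorth : ∀ n m : ℕ, m < n → innerS l1 0 (Q n) (X ^ m) = 0)
    (hk : ∀ n, k n = innerF (P n) (P n))
    (hkhat : ∀ n, khat n = innerS l1 0 (Q n) (Q n))
    (c : ℕ → ℝ) (hP0 : P 0 = 1) (hP1 : P 1 = X)
    (hrec : ∀ n, 1 ≤ n → X * P n = P (n + 1) + C (c n) * P (n - 1))
    (hc : Tendsto (fun n => c n / Real.sqrt n) atTop (𝓝 (1 / (2 * Real.sqrt 3))))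
    (a b : ℕ → ℝ) (ha : ∀ n, a n = k n / khat (n - 1))
    (hb : ∀ n, b n = khat n / k (n - 1)) :
    Tendsto (fun n => a n / Real.sqrt n) atTop (𝓝 (1 / (2 * Real.sqrt 3))) ∧
    Tendsto (fun n => b n / Real.sqrt n) atTop (𝓝 (1 / (2 * Real.sqrt 3))) :=
  sobolev_freud_ab_asymptotics_general l1 hl1 P Q k khat hPmonic hPdeg hPorth hQmonic hQdeg hQorth
    hk hkhat c hrec hc a b ha hb
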